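/- Let X be a real infinite-dimensional Banach space with a Schauder basis (x_n)_{n=1}^∞ with basis constant K. Then sh((x_n)) ≤ 4K³·wk_X(B_X). -/

import Mathlib

open Filter Metric NormedSpace Set Topology

noncomputable section

variable {E : Type*} [NormedAddCommGroup E] [NormedSpace ℝ E]

/-- `f` is the sequence of coordinate functionals of the Schauder basis `x`:
every vector has an expansion along `x`, and such expansions are unique. -/
structure IsSchauderBasis (x : ℕ → E) (f : ℕ → E →L[ℝ] ℝ) : Prop where
  expand : ∀ v : E,
    Tendsto (fun n => ∑ i ∈ Finset.range n, f i v • x i) atTop (𝓝 v)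
  unique : ∀ (a : ℕ → ℝ) (v : E),
    Tendsto (fun n => ∑ i ∈ Finset.range n, a i • x i) atTop (𝓝 v) → ∀ i, a i = f i v

/-- the `n`-th basis projection `P_n`. -/
def basisProj (x : ℕ → E) (f : ℕ → E →L[ℝ] ℝ) (n : ℕ) : E →L[ℝ] E :=
  ∑ i ∈ Finset.range n, (f i).smulRight (x i)

/-- closed linear span of `{y i : i ≥ n}`. -/
def tailSpan (y : ℕ → E) (n : ℕ) : Submodule ℝ E :=
  (Submodule.span ℝ (y '' {i | n ≤ i})).topologicalClosure

/-- `‖g‖_n` : the norm of the restriction of `g` to the closed span of the tail of `y`. -/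
def tailNorm (y : ℕ → E) (g : E →L[ℝ] ℝ) (n : ℕ) : ℝ :=
  ‖g.comp (tailSpan y n).subtypeL‖

/-- the quantity `sh` measuring how far a basic sequence is from being shrinking. -/
def sh (y : ℕ → E) : ℝ :=
  sSup ((fun g : E →L[ℝ] ℝ => limsup (tailNorm y g) atTop) '' {g | ‖g‖ ≤ 1})

/-- non-symmetrised Hausdorff distance `d̂(A,B)`. -/
def hdist (A B : Set E) : ℝ := sSup ((fun a => infDist a B) '' A)

/-- ordinary distance between two sets. -/
def setDist (A B : Set E) : ℝ := sInf {d : ℝ | ∃ a ∈ A, ∃ b ∈ B, d = dist a b}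

/-- `ca` measures how far a sequence is from being norm-Cauchy. -/
def ca (z : ℕ → E) : ℝ :=
  ⨅ n : ℕ, sSup {d : ℝ | ∃ k, n ≤ k ∧ ∃ l, n ≤ l ∧ d = ‖z k - z l‖}

/-- measure of non-separability. -/
def sep (A : Set E) : ℝ :=
  sInf {ε : ℝ | 0 < ε ∧ ∃ C : Set E, C.Countable ∧ ∀ a ∈ A, ∃ c ∈ C, ‖a - c‖ ≤ ε}

/-- `V`: the closed linear span of the coordinate functionals. -/
def dualSpan (g : ℕ → E →L[ℝ] ℝ) : Submodule ℝ (StrongDual ℝ E) :=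
  (Submodule.span ℝ (Set.range g)).topologicalClosure

lemma mem_dualSpan (g : ℕ → E →L[ℝ] ℝ) (i : ℕ) : g i ∈ dualSpan g :=
  Submodule.le_topologicalClosure _ (Submodule.subset_span ⟨i, rfl⟩)

/-- the operator norm on functionals on `dualSpan g` (instance search no longer finds it). -/
instance dualSpanOpNorm (g : ℕ → E →L[ℝ] ℝ) : Norm (↥(dualSpan g) →L[ℝ] ℝ) :=
  @ContinuousLinearMap.hasOpNorm ℝ ℝ (dualSpan g) ℝ _ _ _ _ _ _ (RingHom.id ℝ)

/-- the quantity `bc₁` measuring non-bounded-completeness. -/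
def bc1 (y : ℕ → E) : ℝ :=
  sSup {c : ℝ | ∃ a : ℕ → ℝ,
    (∀ n, ‖∑ i ∈ Finset.range n, a i • y i‖ ≤ 1) ∧
    c = ca (fun n => ∑ i ∈ Finset.range n, a i • y i)}

/-- the quantity `bc₂`. -/
def bc2 (y : ℕ → E) (g : ℕ → E →L[ℝ] ℝ) : ℝ :=
  sSup {c : ℝ | ∃ φ : ↥(dualSpan g) →L[ℝ] ℝ, ‖φ‖ ≤ 1 ∧
    c = ca (fun n => ∑ i ∈ Finset.range n, φ ⟨g i, mem_dualSpan g i⟩ • y i)}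

/-- the quantity `bc₃`. -/
def bc3 (y : ℕ → E) (g : ℕ → E →L[ℝ] ℝ) : ℝ :=
  sSup {c : ℝ | ∃ Φ : StrongDual ℝ (StrongDual ℝ E), ‖Φ‖ ≤ 1 ∧
    c = ca (fun n => ∑ i ∈ Finset.range n, Φ (g i) • y i)}

/-- `α_Y(X)`: measures how well `Y` embeds isomorphically into `X`. -/
def alpha (Y X : Type*) [NormedAddCommGroup Y] [NormedSpace ℝ Y]
    [NormedAddCommGroup X] [NormedSpace ℝ X] : ℝ :=
  sSup {c : ℝ | ∃ T : Y →L[ℝ] X, ‖T‖ ≤ 1 ∧ ∀ y : Y, c * ‖y‖ ≤ ‖T y‖}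

/-- `β_Y(X)`: measures how well `Y` embeds complementably into `X`. -/
def beta (Y X : Type*) [NormedAddCommGroup Y] [NormedSpace ℝ Y]
    [NormedAddCommGroup X] [NormedSpace ℝ X] : ℝ :=
  sSup {c : ℝ | ∃ (A : X →L[ℝ] Y) (B : Y →L[ℝ] X),
    A.comp B = ContinuousLinearMap.id ℝ Y ∧ c * (‖A‖ * ‖B‖) ≤ 1}

/-- weak-star closure of a subset of the bidual. -/
def wstarClosure {X : Type*} [NormedAddCommGroup X] [NormedSpace ℝ X]
    (S : Set (StrongDual ℝ (StrongDual ℝ X))) : Set (StrongDual ℝ (StrongDual ℝ X)) :=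
  {z | StrongDual.toWeakDual z ∈ closure (StrongDual.toWeakDual '' S)}

/-- the measure of weak non-compactness `wk_X(A)`. -/
def wk (X : Type*) [NormedAddCommGroup X] [NormedSpace ℝ X] (A : Set X) : ℝ :=
  hdist (wstarClosure ((inclusionInDoubleDual ℝ X) '' A))
    (Set.range (inclusionInDoubleDual ℝ X))

/-- weak-star cluster points in the bidual of a sequence in `X`. -/
def wclust {X : Type*} [NormedAddCommGroup X] [NormedSpace ℝ X] (u : ℕ → X) :
    Set (StrongDual ℝ (StrongDual ℝ X)) :=
  {z | MapClusterPt (StrongDual.toWeakDual z) atTop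
      (fun n => StrongDual.toWeakDual (inclusionInDoubleDual ℝ X (u n)))}

/-- the measure of weak non-compactness `wck_X(A)`. -/
def wck (X : Type*) [NormedAddCommGroup X] [NormedSpace ℝ X] (A : Set X) : ℝ :=
  sSup {c : ℝ | ∃ u : ℕ → X, (∀ n, u n ∈ A) ∧
    c = setDist (wclust u) (Set.range (inclusionInDoubleDual ℝ X))}


/-- the canonical map `j : X → V*` for a subspace `V` of the dual,
`⟨j v, x*⟩ = x*(v)`. -/
def jfun {X : Type*} [NormedAddCommGroup X] [NormedSpace ℝ X]
    (V : Submodule ℝ (StrongDual ℝ X)) (v : X) : ↥V →L[ℝ] ℝ :=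
  (inclusionInDoubleDual ℝ X v).comp V.subtypeL

/-- the space `ℓ₁` of absolutely summable real sequences. -/
abbrev ell1 : Type := lp (fun _ : ℕ => ℝ) 1

/-- the space `c₀` of real sequences converging to zero, with the sup norm. -/
abbrev czero : Type := ZeroAtInftyContinuousMap ℕ ℝ

end

/-!
Fix `g ∈ B_{X*}` and `δ > 0`, and pick unit vectors `yₙ` in the closed span of
`(xᵢ)_{i ≥ n}` with `g yₙ > limsup ‖g‖ₙ - δ`. A weak* cluster point `Φ ∈ cl_{w*}(B_X)` of
`(yₙ)` annihilates every coordinate functional, hence every `g ∘ Pₙ`, so for each `v ∈ X`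
`Φ g = (Φ - v)(g - g ∘ Pₙ) + g (v - Pₙ v) ≤ (1 + K) ‖Φ - v‖ + g (v - Pₙ v)`,
and the last term tends to `0`. Hence `sh ≤ (1 + K) wk_X(B_X)`, and `1 + K ≤ 4K³` as `K ≥ 1`.
-/

section

variable {X : Type*} [NormedAddCommGroup X] [NormedSpace ℝ X]

namespace IsSchauderBasis

variable {x : ℕ → X} {f : ℕ → X →L[ℝ] ℝ}

theorem coord_apply_basis (hb : IsSchauderBasis x f) (i j : ℕ) :
    f i (x j) = if i = j then 1 else 0 := by
  refine (hb.unique (fun k => if k = j then 1 else 0) (x j)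
    (tendsto_atTop_of_eventually_const (i₀ := j + 1) fun n hn => ?_) i).symm
  simp [Finset.sum_ite_eq', Nat.lt_of_succ_le hn]

def toSchauderBasis (hb : IsSchauderBasis x f) : SchauderBasis ℝ X where
  basis := x
  coord := f
  ortho i j := by simp [hb.coord_apply_basis, Pi.single_apply]
  expansion v := by
    rw [HasSum, SummationFilter.conditional_filter_eq_map_range, tendsto_map'_iff]
    exact hb.expand v

theorem basisProj_eq_proj (hb : IsSchauderBasis x f) :
    basisProj x f = hb.toSchauderBasis.proj :=
  rfl

end IsSchauderBasis

theorem tailSpan_antitone (y : ℕ → X) : Antitone (tailSpan y) := fun _ _ h =>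
  Submodule.topologicalClosure_mono <| Submodule.span_mono <| image_mono fun _ hi => h.trans hi

theorem tailNorm_nonneg (y : ℕ → X) (g : StrongDual ℝ X) (n : ℕ) : 0 ≤ tailNorm y g n :=
  norm_nonneg (g.comp (tailSpan y n).subtypeL)

theorem tailNorm_antitone (y : ℕ → X) (g : StrongDual ℝ X) : Antitone (tailNorm y g) := by
  intro m n h
  refine ContinuousLinearMap.opNorm_le_bound _ (tailNorm_nonneg y g m) fun u => ?_
  exact (g.comp (tailSpan y m).subtypeL).le_opNorm ⟨u, tailSpan_antitone y h u.2⟩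

theorem limsup_tailNorm_le (y : ℕ → X) (g : StrongDual ℝ X) (n : ℕ) :
    limsup (tailNorm y g) atTop ≤ tailNorm y g n :=
  limsup_le_of_le (isCoboundedUnder_le_of_le _ (tailNorm_nonneg y g))
    (eventually_atTop.2 ⟨n, fun _ hm => tailNorm_antitone y g hm⟩)

theorem exists_mem_tailSpan_lt_apply {y : ℕ → X} {g : StrongDual ℝ X} {n : ℕ} {r : ℝ}
    (hr : r < tailNorm y g n) : ∃ v ∈ tailSpan y n, ‖v‖ ≤ 1 ∧ r < g v := by
  obtain ⟨u, hu, hru⟩ := ContinuousLinearMap.exists_lt_apply_of_lt_opNorm _ hr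
  rcases lt_abs.1 hru with hpos | hneg
  · exact ⟨u, u.2, hu.le, hpos⟩
  · exact ⟨-u, neg_mem u.2, (norm_neg (u : X)).trans_le hu.le, by simpa using hneg⟩

theorem inclusionInDoubleDual_mem_closedBall {r : ℝ} {v : X} (hv : v ∈ closedBall 0 r) :
    inclusionInDoubleDual ℝ X v ∈ closedBall 0 r := by
  rw [mem_closedBall_zero_iff] at hv
  exact (dist_zero_right (inclusionInDoubleDual ℝ X v)).trans_le
    ((double_dual_bound ℝ X v).trans hv)

theorem subset_wstarClosure (S : Set (StrongDual ℝ (StrongDual ℝ X))) : S ⊆ wstarClosure S :=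
  fun z hz => show StrongDual.toWeakDual z ∈ closure (StrongDual.toWeakDual '' S) from
    subset_closure (mem_image_of_mem _ hz)

theorem norm_le_of_mem_wstarClosure_closedBall {r : ℝ} {z : StrongDual ℝ (StrongDual ℝ X)}
    (hz : z ∈ wstarClosure (inclusionInDoubleDual ℝ X '' closedBall 0 r)) : ‖z‖ ≤ r := by
  have hsub : StrongDual.toWeakDual '' (inclusionInDoubleDual ℝ X '' closedBall 0 r) ⊆
      WeakDual.toStrongDual ⁻¹' closedBall 0 r := by
    rintro _ ⟨_, ⟨v, hv, rfl⟩, rfl⟩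
    exact inclusionInDoubleDual_mem_closedBall hv
  have hz' : z ∈ closedBall 0 r := closure_minimal hsub (WeakDual.isClosed_closedBall 0 r) hz
  exact (dist_zero_right z).symm.trans_le hz'

theorem infDist_le_wk_closedBall {r : ℝ} {z : StrongDual ℝ (StrongDual ℝ X)}
    (hz : z ∈ wstarClosure (inclusionInDoubleDual ℝ X '' closedBall 0 r)) :
    infDist z (range (inclusionInDoubleDual ℝ X)) ≤ wk X (closedBall 0 r) := by
  refine le_csSup ⟨r, ?_⟩ (mem_image_of_mem _ hz)
  rintro _ ⟨w, hw, rfl⟩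
  calc infDist w (range (inclusionInDoubleDual ℝ X))
      ≤ dist w (inclusionInDoubleDual ℝ X 0) := infDist_le_dist_of_mem (mem_range_self 0)
    _ = ‖w‖ := by rw [map_zero]; exact dist_zero_right w
    _ ≤ r := norm_le_of_mem_wstarClosure_closedBall hw

theorem wk_closedBall_nonneg {r : ℝ} (hr : 0 ≤ r) : 0 ≤ wk X (closedBall 0 r) :=
  infDist_nonneg.trans <| infDist_le_wk_closedBall (z := inclusionInDoubleDual ℝ X 0) <|
    subset_wstarClosure _ (mem_image_of_mem _ (mem_closedBall_self hr))

theorem exists_mem_wstarClosure_forall_mapClusterPt {A : Set X} {r : ℝ}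
    (hA : A ⊆ closedBall 0 r) {u : ℕ → X} (hu : ∀ n, u n ∈ A) :
    ∃ Φ ∈ wstarClosure (inclusionInDoubleDual ℝ X '' A),
      ∀ h : StrongDual ℝ X, MapClusterPt (Φ h) atTop fun n => h (u n) := by
  set w : ℕ → WeakDual ℝ (StrongDual ℝ X) :=
    fun n => StrongDual.toWeakDual (inclusionInDoubleDual ℝ X (u n))
  have hw : ∀ n, w n ∈ StrongDual.toWeakDual '' (inclusionInDoubleDual ℝ X '' A) :=
    fun n => ⟨_, mem_image_of_mem _ (hu n), rfl⟩
  have hball : ∀ n, w n ∈ WeakDual.toStrongDual ⁻¹' closedBall 0 r := fun n =>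
    inclusionInDoubleDual_mem_closedBall (hA (hu n))
  obtain ⟨Φ, -, hΦ⟩ := (WeakDual.isCompact_closedBall 0 r).exists_mapClusterPt (f := atTop)
    (le_principal_iff.2 (mem_map.2 (Eventually.of_forall hball)))
  refine ⟨WeakDual.toStrongDual Φ, ?_, fun h => ?_⟩
  · show StrongDual.toWeakDual (WeakDual.toStrongDual Φ) ∈ closure _
    rw [WeakDual.toWeakDual_toStrongDual]
    exact isClosed_closure.mem_of_mapClusterPt hΦ
      (Eventually.of_forall fun n => subset_closure (hw n))
  · exact hΦ.continuousAt_comp (WeakDual.eval_continuous h).continuousAt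

namespace SchauderBasis

variable (b : SchauderBasis ℝ X)

theorem norm_proj_le_iSup [CompleteSpace X] (n : ℕ) :
    ‖b.proj n‖ ≤ ⨆ m, ‖b.proj m‖ := by
  obtain ⟨C, hC⟩ := b.exists_norm_proj_le
  exact le_ciSup ⟨C, forall_mem_range.2 hC⟩ n

theorem one_le_norm_proj_succ (n : ℕ) : 1 ≤ ‖b.proj (n + 1)‖ := by
  have hle := (b.proj (n + 1)).le_opNorm (b n)
  rw [b.proj_apply_basis_mem, if_pos n.lt_succ_self] at hle
  exact le_of_mul_le_mul_right (by simpa using hle)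
    (norm_pos_iff.2 (b.linearIndependent.ne_zero n))

theorem one_le_iSup_norm_proj [CompleteSpace X] : 1 ≤ ⨆ n, ‖b.proj n‖ :=
  (b.one_le_norm_proj_succ 0).trans (b.norm_proj_le_iSup 1)

theorem coord_eq_zero_of_mem_tailSpan {i n : ℕ} (hin : i < n) {v : X} (hv : v ∈ tailSpan b n) :
    b.coord i v = 0 := by
  suffices tailSpan b n ≤ LinearMap.ker (b.coord i : X →ₗ[ℝ] ℝ) from this hv
  refine Submodule.topologicalClosure_minimal _ ?_ (b.coord i).isClosed_ker
  rw [Submodule.span_le]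
  rintro _ ⟨k, hk, rfl⟩
  simp [b.ortho, (hin.trans_le hk).ne]

theorem comp_proj_eq_sum (g : StrongDual ℝ X) (n : ℕ) :
    g.comp (b.proj n) = ∑ i ∈ Finset.range n, g (b i) • b.coord i := by
  ext v
  simp [b.proj_apply, map_sum, mul_comm]

theorem norm_sub_comp_proj_le {K : ℝ} (hK : ∀ n, ‖b.proj n‖ ≤ K) (g : StrongDual ℝ X)
    (n : ℕ) :
    ‖g - g.comp (b.proj n)‖ ≤ (1 + K) * ‖g‖ :=
  calc ‖g - g.comp (b.proj n)‖ ≤ ‖g‖ + ‖g‖ * ‖b.proj n‖ :=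
        (norm_sub_le _ _).trans (add_le_add_right (g.opNorm_comp_le _) _)
    _ ≤ (1 + K) * ‖g‖ := by nlinarith [hK n, norm_nonneg g]

theorem apply_le_mul_infDist {K : ℝ} (hK : ∀ n, ‖b.proj n‖ ≤ K)
    {Φ : StrongDual ℝ (StrongDual ℝ X)} (hΦ : ∀ i, Φ (b.coord i) = 0) (g : StrongDual ℝ X) :
    Φ g ≤ (1 + K) * ‖g‖ * infDist Φ (range (inclusionInDoubleDual ℝ X)) := by
  have hK0 : 0 ≤ K := (norm_nonneg _).trans (hK 0)
  rw [infDist_eq_iInf, Real.mul_iInf_of_nonneg (by positivity)]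
  refine le_ciInf ?_
  rintro ⟨_, v, rfl⟩
  have hbound : ∀ n, Φ g ≤ (1 + K) * ‖g‖ * dist Φ (inclusionInDoubleDual ℝ X v)
      + g (v - b.proj n v) := by
    intro n
    have hcomp : Φ (g.comp (b.proj n)) = 0 := by
      simp [b.comp_proj_eq_sum, hΦ]
    have hsplit : Φ g = (Φ - inclusionInDoubleDual ℝ X v) (g - g.comp (b.proj n))
        + g (v - b.proj n v) := by
      simp [map_sub, hcomp]
    rw [hsplit, mul_comm]
    gcongr
    calc (Φ - inclusionInDoubleDual ℝ X v) (g - g.comp (b.proj n))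
        ≤ ‖Φ - inclusionInDoubleDual ℝ X v‖ * ‖g - g.comp (b.proj n)‖ :=
          (le_abs_self _).trans ((Φ - _).le_opNorm _)
      _ ≤ dist Φ (inclusionInDoubleDual ℝ X v) * ((1 + K) * ‖g‖) :=
          mul_le_mul (dist_eq_norm Φ _).ge (b.norm_sub_comp_proj_le hK g n) (norm_nonneg _)
            dist_nonneg
  have hlim : Tendsto (fun n => g (v - b.proj n v)) atTop (𝓝 0) := by
    simpa only [sub_self, map_zero, Function.comp_def] using
      (g.continuous.tendsto (v - v)).comp ((b.tendsto_proj v).const_sub v)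
  exact le_of_tendsto_of_tendsto' tendsto_const_nhds (by simpa using hlim.const_add _) hbound

theorem limsup_tailNorm_le_mul_wk {K : ℝ} (hK : ∀ n, ‖b.proj n‖ ≤ K)
    (g : StrongDual ℝ X) :
    limsup (tailNorm b g) atTop ≤ (1 + K) * ‖g‖ * wk X (closedBall 0 1) := by
  set L := limsup (tailNorm b g) atTop
  refine le_of_forall_sub_le fun δ hδ => ?_
  have hy : ∀ n, ∃ v ∈ tailSpan b n, ‖v‖ ≤ 1 ∧ L - δ < g v := fun n =>
    exists_mem_tailSpan_lt_apply ((sub_lt_self L hδ).trans_le (limsup_tailNorm_le _ g n))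
  choose y hy_tail hy_norm hy_lt using hy
  obtain ⟨Φ, hΦB, hΦ⟩ := exists_mem_wstarClosure_forall_mapClusterPt subset_rfl
    fun n => mem_closedBall_zero_iff.2 (hy_norm n)
  have hΦcoord : ∀ i, Φ (b.coord i) = 0 := fun i =>
    isClosed_singleton.mem_of_mapClusterPt (hΦ _) <| (eventually_gt_atTop i).mono
      fun n hn => b.coord_eq_zero_of_mem_tailSpan hn (hy_tail n)
  have hK0 : 0 ≤ K := (norm_nonneg _).trans (hK 0)
  calc L - δ ≤ Φ g :=
        isClosed_Ici.mem_of_mapClusterPt (hΦ g) (Eventually.of_forall fun n => (hy_lt n).le)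
    _ ≤ (1 + K) * ‖g‖ * infDist Φ (range (inclusionInDoubleDual ℝ X)) :=
        b.apply_le_mul_infDist hK hΦcoord g
    _ ≤ (1 + K) * ‖g‖ * wk X (closedBall 0 1) := by
        gcongr
        exact infDist_le_wk_closedBall hΦB

theorem sh_le_mul_wk {K : ℝ} (hK : ∀ n, ‖b.proj n‖ ≤ K) :
    sh b ≤ (1 + K) * wk X (closedBall 0 1) := by
  have hK0 : 0 ≤ K := (norm_nonneg _).trans (hK 0)
  refine csSup_le ⟨_, mem_image_of_mem _ (show ‖(0 : StrongDual ℝ X)‖ ≤ 1 by simp)⟩ ?_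
  rintro _ ⟨g, hg, rfl⟩
  calc limsup (tailNorm b g) atTop ≤ (1 + K) * ‖g‖ * wk X (closedBall 0 1) :=
        b.limsup_tailNorm_le_mul_wk hK g
    _ ≤ (1 + K) * 1 * wk X (closedBall 0 1) := by
        gcongr
        · exact wk_closedBall_nonneg zero_le_one
        · exact hg
    _ = (1 + K) * wk X (closedBall 0 1) := by rw [mul_one]

end SchauderBasis

end

theorem sh_le_wk_general {X : Type*} [NormedAddCommGroup X] [NormedSpace ℝ X]
    [CompleteSpace X]
    (x : ℕ → X) (f : ℕ → X →L[ℝ] ℝ) (hb : IsSchauderBasis x f)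
    (K : ℝ) (hK : K = ⨆ n : ℕ, ‖basisProj x f n‖) :
    sh x ≤ 4 * K ^ 3 * wk X (Metric.closedBall (0 : X) 1) := by
  set b := hb.toSchauderBasis
  rw [hb.basisProj_eq_proj] at hK
  have hK1 : 1 ≤ K := hK ▸ b.one_le_iSup_norm_proj
  calc sh x ≤ (1 + K) * wk X (closedBall 0 1) :=
        b.sh_le_mul_wk fun n => hK ▸ b.norm_proj_le_iSup n
    _ ≤ 4 * K ^ 3 * wk X (closedBall 0 1) := by
        gcongr
        · exact wk_closedBall_nonneg zero_le_one
        · nlinarith [mul_le_mul hK1 hK1 zero_le_one (by linarith : (0 : ℝ) ≤ K)]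

/-- Theorem 5.1(2): `sh((xₙ)) ≤ 4K³·wk_X(B_X)`. -/
theorem sh_le_wk {X : Type*} [NormedAddCommGroup X] [NormedSpace ℝ X]
    [CompleteSpace X] (hinf : ¬ FiniteDimensional ℝ X)
    (x : ℕ → X) (f : ℕ → X →L[ℝ] ℝ) (hb : IsSchauderBasis x f)
    (K : ℝ) (hK : K = ⨆ n : ℕ, ‖basisProj x f n‖) :
    sh x ≤ 4 * K ^ 3 * wk X (Metric.closedBall (0 : X) 1) :=
  sh_le_wk_general x f hb K hK
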